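/- Monotonicity of the number of WBS-detected change-points in the threshold: for a fixed set of candidate intervals and data, if ζ' < ζ'' are two thresholds, then the set of change-points detected by wild binary segmentation at threshold ζ'' is a subset of those detected at threshold ζ'; in particular N̂(ζ) is nonincreasing in ζ. -/
import Mathlib


/-- The CUSUM statistic of `X` on `[s,e]` at split point `b`. -/
noncomputable def cusum (X : ℕ → ℝ) (s e b : ℕ) : ℝ :=
  Real.sqrt (((e : ℝ) - b) / (((e : ℝ) - s + 1) * ((b : ℝ) - s + 1))) *
      ∑ t ∈ Finset.Icc s b, X t
    - Real.sqrt (((b : ℝ) - s + 1) / (((e : ℝ) - s + 1) * ((e : ℝ) - b))) *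
      ∑ t ∈ Finset.Icc (b + 1) e, X t

/-- Wild binary segmentation on `[s,e]` with a fixed collection `F` of candidate intervals
and threshold `ζ`: maximize `|X̃_{s_m,e_m}^b|` over candidate intervals `[s_m,e_m] ⊆ [s,e]`
and all split points `b`; if the maximum exceeds `ζ`, record the maximizer `b₀` and recurse
on `[s,b₀]` and `[b₀+1,e]`. (`fuel` bounds the recursion depth.) -/
noncomputable def wbsRun (F : List (ℕ × ℕ)) (X : ℕ → ℝ) (ζ : ℝ) :
    ℕ → ℕ → ℕ → Finset ℕ
  | 0, _, _ => ∅
  | fuel + 1, s, e =>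
    let cands := (F.filter fun p => decide (s ≤ p.1) && decide (p.2 ≤ e) && decide (p.1 < p.2)).flatMap
      fun p => (List.range' p.1 (p.2 - p.1)).map fun b => (p.1, p.2, b)
    match cands.argmax (fun q => |cusum X q.1 q.2.1 q.2.2|) with
    | none => ∅
    | some q =>
      if ζ < |cusum X q.1 q.2.1 q.2.2| then
        insert q.2.2 (wbsRun F X ζ fuel s q.2.2 ∪ wbsRun F X ζ fuel (q.2.2 + 1) e)
      else ∅

/-- Monotonicity of WBS-detected change-points in the threshold: for fixed candidate
intervals and data (with the deterministic tie-breaking built into the algorithm), the set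
of change-points detected at a higher threshold is contained in the set detected at a lower
threshold. -/
theorem wbs_detected_nested_in_threshold (F : List (ℕ × ℕ)) (X : ℕ → ℝ)
    (ζ' ζ'' : ℝ) (h : ζ' < ζ'') (fuel s e : ℕ) :
    wbsRun F X ζ'' fuel s e ⊆ wbsRun F X ζ' fuel s e := by
  induction fuel generalizing s e with
  | zero => simp [wbsRun]
  | succ n ih =>
    rw [wbsRun, wbsRun]
    cases hm : ((F.filter fun p => decide (s ≤ p.1) && decide (p.2 ≤ e) && decide (p.1 < p.2)).flatMap
      fun p => (List.range' p.1 (p.2 - p.1)).map fun b => (p.1, p.2, b)).argmax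
        (fun q => |cusum X q.1 q.2.1 q.2.2|) with
    | none => simp
    | some q =>
      simp only
      by_cases h2 : ζ'' < |cusum X q.1 q.2.1 q.2.2|
      · rw [if_pos h2, if_pos (h.trans h2)]
        exact Finset.insert_subset_insert _
          (Finset.union_subset_union (ih _ _) (ih _ _))
      · rw [if_neg h2]
        exact Finset.empty_subset _
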